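/- Let Q ∈ 𝒬_n, fix k ∈ {1,…,n}, and for a ∈ {0,1} let y*_a := min{f_Q(x) : x ∈ {0,1}^n, x_k = a}, with given real bounds y̌_a ≤ y*_a ≤ ŷ_a. Define y⁻ := min{0, ŷ_0 − y̌_1} and y⁺ := max{0, y̌_0 − ŷ_1}. Then for every w ∈ ℝ with y⁻ ≤ w ≤ y⁺, an optimum is preserved under the diagonal update Q_{kk} ↦ Q_{kk} + w: S*(Q) ∩ S*(Q + w·e_k e_kᵀ) ≠ ∅. -/

import Mathlib

open scoped BigOperators

/-- Real-valued version of a binary vector. -/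
def toR {n : ℕ} (x : Fin n → Bool) : Fin n → ℝ := fun i => if x i then 1 else 0

/-- QUBO energy f_Q(x) = xᵀQx (for upper-triangular Q this is Σ_{i≤j} Q i j * x i * x j). -/
def energy {n : ℕ} (Q : Matrix (Fin n) (Fin n) ℝ) (x : Fin n → Bool) : ℝ :=
  ∑ i, ∑ j, Q i j * toR x i * toR x j

/-- Upper-triangular predicate: entries below the diagonal vanish. -/
def IsUpperTri {n : ℕ} (Q : Matrix (Fin n) (Fin n) ℝ) : Prop :=
  ∀ i j : Fin n, j < i → Q i j = 0

/-- S*(Q): the set of minimizing binary vectors. -/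
def minimizers {n : ℕ} (Q : Matrix (Fin n) (Fin n) ℝ) : Set (Fin n → Bool) :=
  {x | ∀ y : Fin n → Bool, energy Q x ≤ energy Q y}

/-- y*_a: the minimum of f_Q over the subspace {x : x_k = a}. -/
noncomputable def subOpt1 {n : ℕ} (Q : Matrix (Fin n) (Fin n) ℝ) (k : Fin n)
    (a : Bool) : ℝ :=
  sInf (energy Q '' {x : Fin n → Bool | x k = a})

/-! The update `Q_kk ↦ Q_kk + w` leaves the energies on the slice `x_k = 0` unchanged and
shifts those on the slice `x_k = 1` by `w`, so the slice minima become `y*_0` and `y*_1 + w`.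
The bounds on `w` ensure that the same slice has the smaller minimum before and after the
shift (for `w < 0` it is `x_k = 0`, for `w > 0` it is `x_k = 1`), and a minimizer of that
slice is then optimal for both matrices. -/

open Matrix

variable {n : ℕ}

lemma energy_add_single (Q : Matrix (Fin n) (Fin n) ℝ) (k : Fin n) (w : ℝ)
    (x : Fin n → Bool) :
    energy (Q + single k k w) x = energy Q x + if x k then w else 0 := by
  simp only [energy, Matrix.add_apply, add_mul, Finset.sum_add_distrib, single_apply, ite_and,
    ite_mul, zero_mul]
  cases h : x k <;> simp [toR, h]

lemma isLeast_subOpt1 (Q : Matrix (Fin n) (Fin n) ℝ) (k : Fin n) (a : Bool) :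
    IsLeast (energy Q '' {x | x k = a}) (subOpt1 Q k a) := by
  have hfin : (energy Q '' {x | x k = a}).Finite := (Set.toFinite _).image _
  have hne : (energy Q '' {x | x k = a}).Nonempty :=
    ⟨_, Function.update (fun _ => false) k a, by simp, rfl⟩
  exact ⟨hne.csInf_mem hfin, fun _ hy => csInf_le hfin.bddBelow hy⟩

lemma subOpt1_add_single (Q : Matrix (Fin n) (Fin n) ℝ) (k : Fin n) (w : ℝ) (a : Bool) :
    subOpt1 (Q + single k k w) k a = subOpt1 Q k a + if a then w else 0 := by
  have himage : energy (Q + single k k w) '' {x | x k = a}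
      = (· + if a then w else 0) '' (energy Q '' {x | x k = a}) := by
    rw [Set.image_image]
    refine Set.image_congr fun x (hx : x k = a) => ?_
    rw [energy_add_single, hx]
  have hshift := (monotone_id.add_const (if a then w else 0)).map_isLeast (isLeast_subOpt1 Q k a)
  exact (isLeast_subOpt1 (Q + single k k w) k a).unique (himage ▸ hshift)

lemma mem_minimizers_of_subOpt1_le {Q : Matrix (Fin n) (Fin n) ℝ} {k : Fin n} {a : Bool}
    {x : Fin n → Bool} (hxk : x k = a) (hx : energy Q x = subOpt1 Q k a)
    (hle : subOpt1 Q k a ≤ subOpt1 Q k !a) : x ∈ minimizers Q := by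
  intro y
  rw [hx]
  obtain hy | hy : y k = a ∨ y k = !a := by cases a <;> cases y k <;> simp
  · exact (isLeast_subOpt1 Q k a).2 ⟨y, hy, rfl⟩
  · exact hle.trans ((isLeast_subOpt1 Q k !a).2 ⟨y, hy, rfl⟩)

theorem diagonal_update_preserves_optimum_general (n : ℕ)
    (Q : Matrix (Fin n) (Fin n) ℝ) (k : Fin n)
    (ylo yhi : Bool → ℝ)
    (hbounds : ∀ a : Bool, ylo a ≤ subOpt1 Q k a ∧ subOpt1 Q k a ≤ yhi a)
    (w : ℝ)
    (hw_lo : min 0 (yhi false - ylo true) ≤ w)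
    (hw_hi : w ≤ max 0 (ylo false - yhi true)) :
    (minimizers Q ∩ minimizers (Q + Matrix.single k k w)).Nonempty := by
  suffices ∃ a : Bool, subOpt1 Q k a ≤ subOpt1 Q k !a ∧
      subOpt1 (Q + single k k w) k a ≤ subOpt1 (Q + single k k w) k !a by
    obtain ⟨a, hopt, hopt_w⟩ := this
    obtain ⟨x, hxk, hx⟩ := (isLeast_subOpt1 Q k a).1
    refine ⟨x, mem_minimizers_of_subOpt1_le hxk hx hopt,
      mem_minimizers_of_subOpt1_le hxk ?_ hopt_w⟩
    rw [energy_add_single, subOpt1_add_single, hxk, hx]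
  simp only [subOpt1_add_single]
  obtain ⟨h0lo, h0hi⟩ := hbounds false
  obtain ⟨h1lo, h1hi⟩ := hbounds true
  rcases lt_trichotomy w 0 with hw | rfl | hw
  · have : yhi false - ylo true ≤ w := (min_le_iff.mp hw_lo).resolve_left hw.not_ge
    exact ⟨false, by simp; linarith, by simp; linarith⟩
  · rcases le_total (subOpt1 Q k false) (subOpt1 Q k true) with h | h
    exacts [⟨false, by simpa⟩, ⟨true, by simpa⟩]
  · have : w ≤ ylo false - yhi true := (le_max_iff.mp hw_hi).resolve_left hw.not_ge
    exact ⟨true, by simp; linarith, by simp; linarith⟩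

/-- Optimum preservation under a diagonal parameter update Q_{kk} ↦ Q_{kk} + w,
whenever y⁻ ≤ w ≤ y⁺ with y⁻ = min{0, ŷ₀ − y̌₁} and y⁺ = max{0, y̌₀ − ŷ₁}. -/
theorem diagonal_update_preserves_optimum (n : ℕ) (hn : 1 ≤ n)
    (Q : Matrix (Fin n) (Fin n) ℝ) (hQ : IsUpperTri Q) (k : Fin n)
    (ylo yhi : Bool → ℝ)
    (hbounds : ∀ a : Bool, ylo a ≤ subOpt1 Q k a ∧ subOpt1 Q k a ≤ yhi a)
    (w : ℝ)
    (hw_lo : min 0 (yhi false - ylo true) ≤ w)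
    (hw_hi : w ≤ max 0 (ylo false - yhi true)) :
    (minimizers Q ∩ minimizers (Q + Matrix.single k k w)).Nonempty :=
  diagonal_update_preserves_optimum_general n Q k ylo yhi hbounds w hw_lo hw_hi
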